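/- Let Q be a special rectangle in ℝ^d. Suppose Q is the union of three pairwise disjoint measurable sets E₊, E₋, G with min{λ(E₊), λ(E₋)} > (√2 − 1)·λ(G). Then there exists a special rectangle W ⊆ Q such that min{λ(E₊ ∩ W), λ(E₋ ∩ W)} ≥ ((3 − 2√2)/2)·λ(W). In particular, (√2 − 1, (3 − 2√2)/2) is a John–Strömberg pair for the collection of all special rectangles in ℝ^d. -/

import Mathlib

open MeasureTheory Set

/-- A special rectangle ("false cube") in `ℝ^d`: a product of `d` bounded closed
intervals of positive length, each of whose lengths equals either the minimum
length `m` or twice the minimum length. -/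
def IsSpecialRectangle {d : ℕ} (Q : Set (Fin d → ℝ)) : Prop :=
  ∃ (a l : Fin d → ℝ) (m : ℝ), 0 < m ∧ (∀ i, l i = m ∨ l i = 2 * m) ∧ (∃ i, l i = m) ∧
    Q = Set.univ.pi fun i => Set.Icc (a i) (a i + l i)

/-- `(τ,s)` is a John–Strömberg pair for the collection `𝓔`. -/
def IsJSPair {X : Type*} [MeasurableSpace X] (μ : Measure X)
    (𝓔 : Set (Set X)) (τ s : ℝ) : Prop :=
  0 < τ ∧ 0 < s ∧
  ∀ Q ∈ 𝓔, ∀ Ep Em G : Set X,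
    MeasurableSet Ep → MeasurableSet Em → MeasurableSet G →
    Disjoint Ep Em → Disjoint Ep G → Disjoint Em G →
    Q = Ep ∪ Em ∪ G →
    ENNReal.ofReal τ * μ G < min (μ Ep) (μ Em) →
    ∃ W ∈ 𝓔, W ⊆ Q ∧ ENNReal.ofReal s * μ W ≤ min (μ (W ∩ Ep)) (μ (W ∩ Em))

/-!
Bisecting a longest side of a special rectangle gives two special rectangles of half the volume,
so the special rectangles form a binary tree of "dyadic" cells. Let `E₁` be the smaller of
`E₊, E₋`. If `E₁` has density at least `s` in `Q`, take `W = Q`. Otherwise run the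
Calderón–Zygmund stopping time for `E₁` at level `s`: the maximal cells where `E₁` has density
at least `s` have density at most `2s` (their parent does not stop), and by Lebesgue's density
theorem they cover `E₁` up to a null set. If `E₂` has density at least `s` in one of them, it is
the required `W`. Otherwise every stopping cell `C` has `G`-density at least `1 - 3s`, so
`(1 - 3s)|E₁ ∩ C| ≤ 2s|G ∩ C|`; summing gives `(1 - 3s)|E₁| ≤ 2s|G|`, which contradicts
`τ|G| < |E₁|` because `2s ≤ τ(1 - 3s)` for `τ = √2 - 1`, `s = (3 - 2√2)/2`.
-/

open Filter Metric
open scoped ENNReal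

section Density

variable {α : Type*} [MetricSpace α] [MeasurableSpace α] [BorelSpace α]
  [SecondCountableTopology α] [HasBesicovitchCovering α] [ProperSpace α]
  (μ : Measure α) [IsLocallyFiniteMeasure μ]

theorem measure_eq_zero_of_forall_measure_inter_lt {A : Set α} (hA : MeasurableSet A)
    {s M : ℝ≥0∞} (hs : s < 1) (hM₀ : M ≠ 0) (hM : M ≠ ⊤)
    (h : ∀ x ∈ A, ∀ δ > 0, ∃ r ∈ Ioo 0 δ, ∃ K ⊆ closedBall x r,
      μ (closedBall x r) ≤ M * μ K ∧ μ (A ∩ K) < s * μ K) :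
    μ A = 0 := by
  -- At a density point `x` of `A`, the set `Aᶜ` fills a vanishing proportion of small balls,
  -- hence of the comparable sets `K`, which contradicts `μ (A ∩ K) < s * μ K`.
  refine measure_mono_null (fun x hx => ?_)
    (ae_iff.1 (Besicovitch.ae_tendsto_measure_inter_div_of_measurableSet μ hA.compl))
  intro hlim
  rw [indicator_of_notMem (notMem_compl_iff.2 hx)] at hlim
  set ε := (1 - s) / M
  have hε : 0 < ε := ENNReal.div_pos (tsub_pos_of_lt hs).ne' hM
  obtain ⟨δ, hδ, hsmall⟩ := (nhdsGT_basis (0 : ℝ)).eventually_iff.1 (hlim (Iio_mem_nhds hε))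
  obtain ⟨r, hr, K, hKB, hBK, hAK⟩ := h x hx δ hδ
  have hBfin : μ (closedBall x r) ≠ ⊤ := measure_closedBall_lt_top.ne
  have hKfin : μ (K \ A) ≠ ⊤ :=
    ne_top_of_le_ne_top hBfin (measure_mono (sdiff_subset.trans hKB))
  have hB : μ (Aᶜ ∩ closedBall x r) ≤ ε * μ (closedBall x r) :=
    (ENNReal.div_le_iff_le_mul (Or.inr (ENNReal.div_ne_top (by simp) hM₀)) (Or.inl hBfin)).1
      (hsmall ⟨hr.1, hr.2⟩).le
  have hKA : μ (K \ A) ≤ (1 - s) * μ K :=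
    calc μ (K \ A) ≤ μ (Aᶜ ∩ closedBall x r) :=
          measure_mono fun y hy => ⟨hy.2, hKB hy.1⟩
      _ ≤ ε * μ (closedBall x r) := hB
      _ ≤ ε * (M * μ K) := by gcongr
      _ = (1 - s) * μ K := by rw [← mul_assoc, ENNReal.div_mul_cancel hM₀ hM]
  refine lt_irrefl (μ K) ?_
  calc μ K = μ (A ∩ K) + μ (K \ A) := by rw [inter_comm, measure_inter_add_sdiff K hA]
    _ < s * μ K + (1 - s) * μ K := ENNReal.add_lt_add_of_lt_of_le hKfin hAK hKA
    _ = μ K := by rw [← add_mul, add_tsub_cancel_of_le hs.le, one_mul]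

end Density

section Measure

variable {α : Type*} [MeasurableSpace α] {μ : Measure α}

theorem mul_measure_le_of_measure_diff_biUnion_eq_zero {ι : Type*} {S : Set ι}
    (hS : S.Countable) {C : ι → Set α} (hd : S.PairwiseDisjoint C)
    (hC : ∀ i ∈ S, MeasurableSet (C i)) {A B : Set α} (hA : μ (A \ ⋃ i ∈ S, C i) = 0)
    {a b : ℝ≥0∞} (h : ∀ i ∈ S, a * μ (A ∩ C i) ≤ b * μ (B ∩ C i)) :
    a * μ A ≤ b * μ B := by
  have hU : MeasurableSet (⋃ i ∈ S, C i) := .biUnion hS hC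
  have hsum (D : Set α) : μ (D ∩ ⋃ i ∈ S, C i) = ∑' i : S, μ (D ∩ C i) := by
    rw [inter_comm, ← Measure.restrict_apply hU, measure_biUnion hS hd hC]
    exact tsum_congr fun i => by rw [Measure.restrict_apply (hC i i.2), inter_comm]
  calc a * μ A ≤ a * μ (A ∩ ⋃ i ∈ S, C i) := by
        grw [measure_le_inter_add_sdiff μ A (⋃ i ∈ S, C i), hA, add_zero]
    _ = ∑' i : S, a * μ (A ∩ C i) := by rw [hsum, ENNReal.tsum_mul_left]
    _ ≤ ∑' i : S, b * μ (B ∩ C i) := ENNReal.tsum_le_tsum fun i => h i i.2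
    _ = b * μ (B ∩ ⋃ i ∈ S, C i) := by rw [hsum, ENNReal.tsum_mul_left]
    _ ≤ b * μ B := by grw [inter_subset_left]

theorem mul_measure_inter_le_of_subset_union {C E₁ E₂ G : Set α} {s : ℝ≥0∞}
    (hC : C ⊆ E₁ ∪ E₂ ∪ G) (hCfin : μ C ≠ ⊤) (h₁ : μ (E₁ ∩ C) ≤ 2 * s * μ C)
    (h₂ : μ (E₂ ∩ C) ≤ s * μ C) :
    (1 - 3 * s) * μ (E₁ ∩ C) ≤ 2 * s * μ (G ∩ C) := by
  have hG : (1 - 3 * s) * μ C ≤ μ (G ∩ C) := by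
    rw [ENNReal.sub_mul fun _ _ => hCfin, one_mul, tsub_le_iff_right]
    calc μ C ≤ μ (E₁ ∩ C ∪ E₂ ∩ C ∪ G ∩ C) :=
          measure_mono fun x hx => by rcases hC hx with (h | h) | h <;> simp [h, hx]
      _ ≤ μ (E₁ ∩ C) + μ (E₂ ∩ C) + μ (G ∩ C) :=
          (measure_union_le _ _).trans (by gcongr; exact measure_union_le _ _)
      _ ≤ 2 * s * μ C + s * μ C + μ (G ∩ C) := by gcongr
      _ = μ (G ∩ C) + 3 * s * μ C := by ring
  calc (1 - 3 * s) * μ (E₁ ∩ C) ≤ (1 - 3 * s) * (2 * s * μ C) := by gcongr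
    _ = 2 * s * ((1 - 3 * s) * μ C) := by ring
    _ ≤ 2 * s * μ (G ∩ C) := by gcongr

end Measure

section MinimalWords

variable {β : Type*} {P : List β → Prop} {v w : List β}

def minimalWords (P : List β → Prop) : Set (List β) :=
  {w | P w ∧ ∀ k < w.length, ¬P (w.take k)}

theorem eq_of_prefix_of_mem_minimalWords (hv : v ∈ minimalWords P) (hw : w ∈ minimalWords P)
    (h : v <+: w) : v = w := by
  rw [List.prefix_iff_eq_take] at h
  rcases lt_or_ge v.length w.length with hlt | hge
  · exact absurd (h ▸ hv.1) (hw.2 _ hlt)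
  · rwa [List.take_of_length_le hge] at h

theorem exists_take_mem_minimalWords (hw : P w) : ∃ k, w.take k ∈ minimalWords P := by
  classical
  have hex : ∃ k, P (w.take k) := ⟨w.length, by rwa [List.take_length]⟩
  refine ⟨Nat.find hex, Nat.find_spec hex, fun j hj hPj => ?_⟩
  have hjk : j < Nat.find hex := hj.trans_le (List.length_take_le _ _)
  rw [List.take_take, min_eq_left hjk.le] at hPj
  exact Nat.find_min hex hjk hPj

end MinimalWords

structure SpecialBox (d : ℕ) where
  lower : Fin d → ℝ
  upper : Fin d → ℝ
  unit : ℝ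
  unit_pos : 0 < unit
  side_eq : ∀ i, upper i - lower i = unit ∨ upper i - lower i = 2 * unit
  exists_side_eq : ∃ i, upper i - lower i = unit

namespace SpecialBox

variable {d : ℕ} (B : SpecialBox d)

def side (i : Fin d) : ℝ := B.upper i - B.lower i

def Icc : Set (Fin d → ℝ) := Set.Icc B.lower B.upper

/-- Half-open boxes, so that the two halves of a box partition it. -/
def Ioc : Set (Fin d → ℝ) := univ.pi fun i => Set.Ioc (B.lower i) (B.upper i)

def vol : ℝ := ∏ i, B.side i

theorem unit_le_side (i : Fin d) : B.unit ≤ B.side i := by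
  rcases B.side_eq i with h | h <;> simp only [side, h] <;> linarith [B.unit_pos]

theorem side_le_two_mul_unit (i : Fin d) : B.side i ≤ 2 * B.unit := by
  rcases B.side_eq i with h | h <;> simp only [side, h] <;> linarith [B.unit_pos]

theorem side_pos (i : Fin d) : 0 < B.side i := B.unit_pos.trans_le (B.unit_le_side i)

theorem lower_lt_upper (i : Fin d) : B.lower i < B.upper i := sub_pos.1 (B.side_pos i)

theorem isSpecialRectangle_Icc : IsSpecialRectangle B.Icc := by
  refine ⟨B.lower, B.side, B.unit, B.unit_pos, B.side_eq, B.exists_side_eq, ?_⟩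
  simp only [Icc, side, add_sub_cancel, pi_univ_Icc]

theorem _root_.IsSpecialRectangle.exists_eq_Icc {Q : Set (Fin d → ℝ)}
    (hQ : IsSpecialRectangle Q) : ∃ B : SpecialBox d, Q = B.Icc := by
  obtain ⟨a, l, m, hm, hl, hlm, rfl⟩ := hQ
  refine ⟨⟨a, a + l, m, hm, by simpa using hl, by simpa using hlm⟩, ?_⟩
  simp only [Icc, ← pi_univ_Icc, Pi.add_apply]

theorem upper_mem_Ioc : B.upper ∈ B.Ioc := fun i _ => ⟨B.lower_lt_upper i, le_rfl⟩

theorem measurableSet_Ioc : MeasurableSet B.Ioc := .univ_pi fun _ => _root_.measurableSet_Ioc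

theorem Icc_eq_closure_Ioc : B.Icc = closure B.Ioc := by
  simp only [Icc, Ioc, closure_pi_set, closure_Ioc (B.lower_lt_upper _).ne, pi_univ_Icc]

theorem Ioc_subset_Icc : B.Ioc ⊆ B.Icc := B.Icc_eq_closure_Ioc ▸ subset_closure

theorem Icc_subset_Icc {B C : SpecialBox d} (h : C.Ioc ⊆ B.Ioc) : C.Icc ⊆ B.Icc := by
  simpa only [Icc_eq_closure_Ioc] using closure_mono h

theorem volume_Ioc : volume B.Ioc = ENNReal.ofReal B.vol := by
  rw [Ioc, Real.volume_pi_Ioc, vol, ENNReal.ofReal_prod_of_nonneg fun i _ => (B.side_pos i).le]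
  rfl

theorem volume_Icc : volume B.Icc = volume B.Ioc :=
  (measure_congr Measure.univ_pi_Ioc_ae_eq_Icc).symm

theorem volume_Icc_diff_Ioc : volume (B.Icc \ B.Ioc) = 0 :=
  (ae_eq_set.1 Measure.univ_pi_Ioc_ae_eq_Icc).2

theorem unit_pow_le_vol : B.unit ^ d ≤ B.vol := by
  simpa [vol] using Finset.prod_le_prod (s := Finset.univ) (fun i _ => B.unit_pos.le)
    fun i _ => B.unit_le_side i

theorem Ioc_subset_closedBall {x : Fin d → ℝ} (hx : x ∈ B.Ioc) :
    B.Ioc ⊆ closedBall x (2 * B.unit) := by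
  intro y hy
  rw [mem_closedBall, dist_pi_le_iff (by linarith [B.unit_pos])]
  intro i
  have hxi := hx i trivial
  have hyi := hy i trivial
  rw [Real.dist_eq, abs_le]
  constructor <;> linarith [hxi.1, hxi.2, hyi.1, hyi.2, B.side_le_two_mul_unit i,
    show B.side i = B.upper i - B.lower i from rfl]

theorem volume_closedBall_le (x : Fin d → ℝ) :
    volume (closedBall x (2 * B.unit)) ≤ 4 ^ d * volume B.Ioc := by
  rw [Real.volume_pi_closedBall x (by linarith [B.unit_pos]), Fintype.card_fin, volume_Ioc,
    ← ENNReal.ofReal_ofNat 4, ← ENNReal.ofReal_pow (by norm_num),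
    ← ENNReal.ofReal_mul (by positivity), show 2 * (2 * B.unit) = 4 * B.unit by ring, mul_pow]
  gcongr
  exact B.unit_pow_le_vol

noncomputable def longest : Fin d :=
  have : Nonempty (Fin d) := ⟨B.exists_side_eq.choose⟩
  (Finite.exists_max B.side).choose

theorem side_le_side_longest (i : Fin d) : B.side i ≤ B.side B.longest :=
  have : Nonempty (Fin d) := ⟨B.exists_side_eq.choose⟩
  (Finite.exists_max B.side).choose_spec i

noncomputable def mid : ℝ := (B.lower B.longest + B.upper B.longest) / 2

theorem lower_lt_mid : B.lower B.longest < B.mid := by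
  rw [mid]
  linarith [B.lower_lt_upper B.longest]

theorem mid_lt_upper : B.mid < B.upper B.longest := by
  rw [mid]
  linarith [B.lower_lt_upper B.longest]

noncomputable def half (b : Bool) : SpecialBox d where
  lower := if b then Function.update B.lower B.longest B.mid else B.lower
  upper := if b then B.upper else Function.update B.upper B.longest B.mid
  unit := B.side B.longest / 2
  unit_pos := half_pos (B.side_pos _)
  -- The new unit is the old one if some side had length `2 * unit`, and `unit / 2` otherwise.
  side_eq i := by
    rcases eq_or_ne i B.longest with rfl | hi
    · left
      cases b <;> simp only [mid, side, if_true, Bool.false_eq_true, if_false,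
        Function.update_self] <;> ring
    have := B.side_le_side_longest i
    cases b <;> simp only [if_true, Bool.false_eq_true, if_false, Function.update_of_ne hi] <;>
    rcases B.side_eq i with h | h <;> rcases B.side_eq B.longest with h' | h' <;>
      simp only [side, h, h'] at this ⊢ <;>
      first | (left; ring1) | (right; ring1) | linarith [B.unit_pos]
  exists_side_eq := ⟨B.longest, by
    cases b <;> simp only [mid, side, if_true, Bool.false_eq_true, if_false,
      Function.update_self] <;> ring⟩

theorem Ioc_half_false : (B.half false).Ioc = {x | x B.longest ≤ B.mid} ∩ B.Ioc :=
  pi_univ_Ioc_update_right B.mid_lt_upper.le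

theorem Ioc_half_true : (B.half true).Ioc = {x | B.mid < x B.longest} ∩ B.Ioc :=
  pi_univ_Ioc_update_left B.lower_lt_mid.le

theorem Ioc_half_subset (b : Bool) : (B.half b).Ioc ⊆ B.Ioc := by
  cases b
  · exact B.Ioc_half_false ▸ inter_subset_right
  · exact B.Ioc_half_true ▸ inter_subset_right

theorem Ioc_half_false_union_true : (B.half false).Ioc ∪ (B.half true).Ioc = B.Ioc :=
  pi_univ_Ioc_update_union _ _ _ _ ⟨B.lower_lt_mid.le, B.mid_lt_upper.le⟩

theorem disjoint_Ioc_half {b b' : Bool} (h : b ≠ b') : Disjoint (B.half b).Ioc (B.half b').Ioc := by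
  have : Disjoint (B.half false).Ioc (B.half true).Ioc := disjoint_pi_univ_Ioc_update_left_right
  cases b <;> cases b' <;> first | exact absurd rfl h | exact this | exact this.symm

theorem side_half (b : Bool) :
    (B.half b).side = Function.update B.side B.longest (B.side B.longest / 2) := by
  funext i
  rcases eq_or_ne i B.longest with rfl | hi
  · cases b <;> simp [half, side, mid] <;> ring
  · cases b <;> simp [half, side, hi]

theorem vol_half (b : Bool) : (B.half b).vol = B.vol / 2 := by
  rw [vol, side_half, Finset.prod_update_of_mem (Finset.mem_univ _), vol,
    Finset.prod_eq_mul_prod_sdiff_singleton_of_mem (Finset.mem_univ B.longest)]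
  ring

theorem volume_Ioc_half (b : Bool) : volume B.Ioc = 2 * volume (B.half b).Ioc := by
  rw [volume_Ioc, volume_Ioc, vol_half, ← ENNReal.ofReal_ofNat 2, ← ENNReal.ofReal_mul zero_le_two]
  ring_nf

noncomputable def cell (w : List Bool) : SpecialBox d := w.foldl half B

@[simp] theorem cell_nil : B.cell [] = B := rfl

@[simp] theorem cell_cons (b : Bool) (w : List Bool) : B.cell (b :: w) = (B.half b).cell w := rfl

theorem cell_append (v w : List Bool) : B.cell (v ++ w) = (B.cell v).cell w :=
  List.foldl_append

theorem cell_concat (w : List Bool) (b : Bool) : B.cell (w ++ [b]) = (B.cell w).half b := by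
  rw [cell_append]
  rfl

theorem Ioc_cell_subset (w : List Bool) : (B.cell w).Ioc ⊆ B.Ioc := by
  induction w generalizing B with
  | nil => exact subset_rfl
  | cons b w ih => exact (ih _).trans (B.Ioc_half_subset b)

theorem Ioc_cell_subset_of_prefix {v w : List Bool} (h : v <+: w) :
    (B.cell w).Ioc ⊆ (B.cell v).Ioc := by
  obtain ⟨u, rfl⟩ := h
  rw [cell_append]
  exact Ioc_cell_subset _ u

theorem disjoint_Ioc_cell {v w : List Bool} (hvw : ¬v <+: w) (hwv : ¬w <+: v) :
    Disjoint (B.cell v).Ioc (B.cell w).Ioc := by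
  induction v generalizing B w with
  | nil => exact absurd List.nil_prefix hvw
  | cons b v ih =>
    cases w with
    | nil => exact absurd List.nil_prefix hwv
    | cons b' w =>
      rcases eq_or_ne b b' with rfl | hb
      · simp only [List.cons_prefix_cons, true_and] at hvw hwv
        exact ih _ hvw hwv
      · exact (B.disjoint_Ioc_half hb).mono (Ioc_cell_subset _ v) (Ioc_cell_subset _ w)

theorem vol_cell (w : List Bool) : (B.cell w).vol = B.vol / 2 ^ w.length := by
  induction w generalizing B with
  | nil => simp
  | cons b w ih => rw [cell_cons, ih, vol_half, List.length_cons, pow_succ', div_div]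

theorem exists_unit_cell_lt {ε : ℝ} (hε : 0 < ε) :
    ∃ n, ∀ w : List Bool, w.length = n → (B.cell w).unit < ε := by
  have hd : d ≠ 0 := fun h => by subst h; exact B.exists_side_eq.choose.elim0
  obtain ⟨n, hn⟩ := pow_unbounded_of_one_lt (B.vol / ε ^ d) one_lt_two
  refine ⟨n, fun w hw => lt_of_pow_lt_pow_left₀ d hε.le ?_⟩
  calc (B.cell w).unit ^ d ≤ (B.cell w).vol := unit_pow_le_vol _
    _ = B.vol / 2 ^ n := by rw [vol_cell, hw]
    _ < ε ^ d := by rwa [div_lt_iff₀ (by positivity), ← div_lt_iff₀' (by positivity)]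

open Classical in
/-- For `x ∈ B.Ioc`, `B.cell (B.path x n)` is the cell of the `n`-th generation containing `x`. -/
noncomputable def path (x : Fin d → ℝ) : ℕ → List Bool
  | 0 => []
  | n + 1 => path x n ++ [if x ∈ ((B.cell (path x n)).half false).Ioc then false else true]

theorem length_path (x : Fin d → ℝ) (n : ℕ) : (B.path x n).length = n := by
  induction n with
  | zero => rfl
  | succ n ih => simp [path, ih]

theorem mem_Ioc_cell_path {x : Fin d → ℝ} (hx : x ∈ B.Ioc) (n : ℕ) :
    x ∈ (B.cell (B.path x n)).Ioc := by
  induction n with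
  | zero => exact hx
  | succ n ih =>
    rw [path, cell_concat]
    split_ifs with h
    · exact h
    · rw [← Ioc_half_false_union_true] at ih
      exact ih.resolve_left h

theorem volume_eq_zero_of_forall_measure_inter_cell_path_lt {A : Set (Fin d → ℝ)}
    (hA : MeasurableSet A) (hAB : A ⊆ B.Ioc) {s : ℝ≥0∞} (hs : s < 1)
    (h : ∀ x ∈ A, ∀ n, volume (A ∩ (B.cell (B.path x n)).Ioc) <
      s * volume (B.cell (B.path x n)).Ioc) :
    volume A = 0 := by
  refine measure_eq_zero_of_forall_measure_inter_lt volume hA hs (M := 4 ^ d) (by simp) (by simp)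
    fun x hx δ hδ => ?_
  obtain ⟨n, hn⟩ := B.exists_unit_cell_lt (half_pos hδ)
  set C := B.cell (B.path x n)
  have hxC : x ∈ C.Ioc := B.mem_Ioc_cell_path (hAB hx) n
  exact ⟨2 * C.unit, ⟨by linarith [C.unit_pos], by linarith [hn _ (B.length_path x n)]⟩, C.Ioc,
    C.Ioc_subset_closedBall hxC, C.volume_closedBall_le x, h x hx n⟩

theorem volume_inter_Ioc_cell_le {E : Set (Fin d → ℝ)} {s : ℝ≥0∞} {w : List Bool}
    (hw : w ∈ minimalWords fun v => s * volume (B.cell v).Ioc ≤ volume (E ∩ (B.cell v).Ioc))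
    (hB : volume (E ∩ B.Ioc) < s * volume B.Ioc) :
    volume (E ∩ (B.cell w).Ioc) ≤ 2 * s * volume (B.cell w).Ioc := by
  obtain ⟨v, b, rfl⟩ := w.eq_nil_or_concat'.resolve_left (by rintro rfl; exact hB.not_ge hw.1)
  have hv : ¬s * volume (B.cell v).Ioc ≤ volume (E ∩ (B.cell v).Ioc) := by
    simpa using hw.2 v.length (by simp)
  calc volume (E ∩ (B.cell (v ++ [b])).Ioc) ≤ volume (E ∩ (B.cell v).Ioc) :=
        measure_mono (inter_subset_inter_right _ (B.Ioc_cell_subset_of_prefix (v.prefix_append _)))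
    _ ≤ s * volume (B.cell v).Ioc := (not_le.1 hv).le
    _ = 2 * s * volume (B.cell (v ++ [b])).Ioc := by
        rw [cell_concat, volume_Ioc_half _ b, mul_left_comm, mul_assoc]

theorem exists_calderonZygmund {E : Set (Fin d → ℝ)} (hE : MeasurableSet E) {s : ℝ≥0∞}
    (hs : s < 1) (hB : volume (E ∩ B.Ioc) < s * volume B.Ioc) :
    ∃ S : Set (SpecialBox d), S.Countable ∧ S.PairwiseDisjoint Ioc ∧
      (∀ C ∈ S, C.Ioc ⊆ B.Ioc ∧ s * volume C.Ioc ≤ volume (E ∩ C.Ioc) ∧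
        volume (E ∩ C.Ioc) ≤ 2 * s * volume C.Ioc) ∧
      volume ((E ∩ B.Icc) \ ⋃ C ∈ S, C.Ioc) = 0 := by
  set P : List Bool → Prop := fun w => s * volume (B.cell w).Ioc ≤ volume (E ∩ (B.cell w).Ioc)
  set M := minimalWords P
  have hdisj : M.PairwiseDisjoint fun w => (B.cell w).Ioc := fun v hv w hw hvw =>
    B.disjoint_Ioc_cell (fun h => hvw (eq_of_prefix_of_mem_minimalWords hv hw h))
      (fun h => hvw (eq_of_prefix_of_mem_minimalWords hw hv h).symm)
  have hinj : M.InjOn B.cell := fun v hv w hw h => by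
    by_contra hvw
    have := hdisj hv hw hvw
    rw [Function.onFun, h, disjoint_self] at this
    exact this.subset (upper_mem_Ioc _)
  have hSc : (B.cell '' M).Countable := M.to_countable.image _
  refine ⟨B.cell '' M, hSc, hinj.pairwiseDisjoint_image.2 hdisj, ?_, ?_⟩
  · rintro _ ⟨w, hw, rfl⟩
    exact ⟨B.Ioc_cell_subset w, hw.1, B.volume_inter_Ioc_cell_le hw hB⟩
  set U := ⋃ C ∈ B.cell '' M, C.Ioc
  suffices hnull : volume ((E ∩ B.Ioc) \ U) = 0 by
    refine measure_mono_null (fun x ⟨⟨hxE, hxB⟩, hxU⟩ => ?_)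
      (measure_union_null hnull B.volume_Icc_diff_Ioc)
    by_cases hx : x ∈ B.Ioc
    exacts [Or.inl ⟨⟨hxE, hx⟩, hxU⟩, Or.inr ⟨hxB, hx⟩]
  refine B.volume_eq_zero_of_forall_measure_inter_cell_path_lt
    ((hE.inter B.measurableSet_Ioc).diff (.biUnion hSc fun C _ => C.measurableSet_Ioc))
    (fun x hx => hx.1.2) hs fun x hx n => ?_
  have hnP : ¬P (B.path x n) := fun hP => by
    obtain ⟨k, hk⟩ := exists_take_mem_minimalWords hP
    exact hx.2 (mem_biUnion ⟨_, hk, rfl⟩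
      (B.Ioc_cell_subset_of_prefix (List.take_prefix _ _) (B.mem_Ioc_cell_path hx.1.2 n)))
  exact (measure_mono (inter_subset_inter_left _ fun y hy => hy.1.1)).trans_lt (not_le.1 hnP)

theorem exists_dense_subbox {E₁ E₂ G : Set (Fin d → ℝ)} (hE₁ : MeasurableSet E₁)
    (hB : B.Icc = E₁ ∪ E₂ ∪ G) {s τ : ℝ≥0∞} (hsτ : 2 * s ≤ τ * (1 - 3 * s))
    (hG : τ * volume G < volume E₁) (h₁₂ : volume E₁ ≤ volume E₂) :
    ∃ C : SpecialBox d, C.Icc ⊆ B.Icc ∧ s * volume C.Icc ≤ volume (E₁ ∩ C.Icc) ∧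
      s * volume C.Icc ≤ volume (E₂ ∩ C.Icc) := by
  have hE₁B : E₁ ⊆ B.Icc := hB ▸ subset_union_left.trans subset_union_left
  have hE₂B : E₂ ⊆ B.Icc := hB ▸ subset_union_right.trans subset_union_left
  by_cases hdense : s * volume B.Icc ≤ volume E₁
  · refine ⟨B, subset_rfl, ?_, ?_⟩
    · rwa [inter_eq_left.2 hE₁B]
    · rw [inter_eq_left.2 hE₂B]
      exact hdense.trans h₁₂
  rw [not_le, volume_Icc] at hdense
  have hs0 : s ≠ 0 := by
    rintro rfl
    simp at hdense
  have h3s : 1 - 3 * s ≠ 0 := fun h => hs0 (by simpa [h] using hsτ)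
  have hs1 : s < 1 :=
    (le_mul_of_one_le_left' (by norm_num)).trans_lt
      (tsub_pos_iff_lt.1 (pos_iff_ne_zero.2 h3s))
  obtain ⟨S, hSc, hSd, hS, hnull⟩ :=
    B.exists_calderonZygmund hE₁ hs1 ((measure_mono inter_subset_left).trans_lt hdense)
  by_cases hE₂ : ∃ C ∈ S, s * volume C.Ioc ≤ volume (E₂ ∩ C.Ioc)
  · obtain ⟨C, hC, hC₂⟩ := hE₂
    have hmono (E : Set (Fin d → ℝ)) : volume (E ∩ C.Ioc) ≤ volume (E ∩ C.Icc) :=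
      measure_mono (inter_subset_inter_right _ C.Ioc_subset_Icc)
    exact ⟨C, Icc_subset_Icc (hS C hC).1, volume_Icc C ▸ (hS C hC).2.1.trans (hmono E₁),
      volume_Icc C ▸ hC₂.trans (hmono E₂)⟩
  push Not at hE₂
  rw [inter_eq_left.2 hE₁B] at hnull
  have hsum : (1 - 3 * s) * volume E₁ ≤ 2 * s * volume G :=
    mul_measure_le_of_measure_diff_biUnion_eq_zero hSc hSd (fun C _ => C.measurableSet_Ioc) hnull
      fun C hC => mul_measure_inter_le_of_subset_union (hB ▸ (hS C hC).1.trans B.Ioc_subset_Icc)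
        (volume_Ioc C ▸ ENNReal.ofReal_ne_top) (hS C hC).2.2 (hE₂ C hC).le
  refine absurd ?_ (lt_irrefl ((1 - 3 * s) * volume E₁))
  calc (1 - 3 * s) * volume E₁ ≤ 2 * s * volume G := hsum
    _ ≤ (1 - 3 * s) * (τ * volume G) := by grw [hsτ, mul_comm τ, mul_assoc]
    _ < (1 - 3 * s) * volume E₁ := ENNReal.mul_lt_mul_right h3s (by simp) hG

end SpecialBox

theorem IsSpecialRectangle.exists_min_le {d : ℕ} {Q Ep Em G : Set (Fin d → ℝ)}
    (hQ : IsSpecialRectangle Q) (hEp : MeasurableSet Ep) (hEm : MeasurableSet Em)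
    (hu : Q = Ep ∪ Em ∪ G) {s τ : ℝ≥0∞} (hsτ : 2 * s ≤ τ * (1 - 3 * s))
    (hmin : τ * volume G < min (volume Ep) (volume Em)) :
    ∃ W, IsSpecialRectangle W ∧ W ⊆ Q ∧
      s * volume W ≤ min (volume (Ep ∩ W)) (volume (Em ∩ W)) := by
  obtain ⟨B, rfl⟩ := hQ.exists_eq_Icc
  rw [lt_min_iff] at hmin
  rcases le_total (volume Ep) (volume Em) with h | h
  · obtain ⟨C, hCB, hp, hm⟩ := B.exists_dense_subbox hEp hu hsτ hmin.1 h
    exact ⟨C.Icc, C.isSpecialRectangle_Icc, hCB, le_min hp hm⟩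
  · obtain ⟨C, hCB, hm, hp⟩ :=
      B.exists_dense_subbox hEm (by rw [hu, union_comm Ep]) hsτ hmin.2 h
    exact ⟨C.Icc, C.isSpecialRectangle_Icc, hCB, le_min hp hm⟩

theorem isJSPair_isSpecialRectangle {d : ℕ} {τ s : ℝ} (hτ : 0 < τ) (hs : 0 < s)
    (hsτ : 2 * ENNReal.ofReal s ≤ ENNReal.ofReal τ * (1 - 3 * ENNReal.ofReal s)) :
    IsJSPair volume {C : Set (Fin d → ℝ) | IsSpecialRectangle C} τ s := by
  refine ⟨hτ, hs, fun Q hQ Ep Em G hEp hEm _ _ _ _ hu hmin => ?_⟩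
  obtain ⟨W, hW, hWQ, hWs⟩ := IsSpecialRectangle.exists_min_le hQ hEp hEm hu hsτ hmin
  exact ⟨W, hW, hWQ, by simpa only [inter_comm W] using hWs⟩

theorem two_mul_ofReal_le_ofReal_sqrt_two_sub_one_mul :
    2 * ENNReal.ofReal ((3 - 2 * Real.sqrt 2) / 2) ≤
      ENNReal.ofReal (Real.sqrt 2 - 1) * (1 - 3 * ENNReal.ofReal ((3 - 2 * Real.sqrt 2) / 2)) := by
  have hsq : Real.sqrt 2 ^ 2 = 2 := Real.sq_sqrt zero_le_two
  have hlt := Real.sqrt_two_lt_three_halves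
  have hgt := Real.one_lt_sqrt_two
  rw [← ENNReal.ofReal_ofNat 2, ← ENNReal.ofReal_mul zero_le_two, ← ENNReal.ofReal_ofNat 3,
    ← ENNReal.ofReal_mul zero_le_three, ← ENNReal.ofReal_one,
    ← ENNReal.ofReal_sub _ (by linarith), ← ENNReal.ofReal_mul (by linarith)]
  exact ENNReal.ofReal_le_ofReal (by nlinarith)

theorem stmt3 {d : ℕ}
    (Q Ep Em G : Set (Fin d → ℝ)) (hQ : IsSpecialRectangle Q)
    (hEp : MeasurableSet Ep) (hEm : MeasurableSet Em)
    (hu : Q = Ep ∪ Em ∪ G)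
    (hmin : ENNReal.ofReal (Real.sqrt 2 - 1) * volume G < min (volume Ep) (volume Em)) :
    (∃ W : Set (Fin d → ℝ), IsSpecialRectangle W ∧ W ⊆ Q ∧
      ENNReal.ofReal ((3 - 2 * Real.sqrt 2) / 2) * volume W ≤
        min (volume (Ep ∩ W)) (volume (Em ∩ W))) ∧
    IsJSPair volume {C : Set (Fin d → ℝ) | IsSpecialRectangle C}
      (Real.sqrt 2 - 1) ((3 - 2 * Real.sqrt 2) / 2) :=
  ⟨hQ.exists_min_le hEp hEm hu two_mul_ofReal_le_ofReal_sqrt_two_sub_one_mul hmin,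
    isJSPair_isSpecialRectangle (by linarith [Real.one_lt_sqrt_two])
      (by linarith [Real.sqrt_two_lt_three_halves]) two_mul_ofReal_le_ofReal_sqrt_two_sub_one_mul⟩
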